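/- arXiv:1312.0063 — 2 statements merged into one kernel-verified Lean document; each statement's English description precedes it below -/
import Mathlib

section
/- For every nonnegative integer s with (f_j)_s ≠ 0 for all 1 ≤ j ≤ r, the ratio Π_{j=1}^{r} (f_j + m_j)_s / (f_j)_s equals Σ_{k=0}^{min(m,s)} C_k · s! / (s − k)! , i.e. 1 + Σ_{k=1}^{m} C_k · s(s−1)⋯(s−k+1). -/
/-- Pochhammer symbol `(a)ₖ = a(a+1)⋯(a+k−1)` for complex `a`. -/
noncomputable def poch (a : ℂ) (k : ℕ) : ℂ := ∏ i ∈ Finset.range k, (a + i)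

/-- Stirling numbers of the second kind `S(n, k)`. -/
def stirling2 : ℕ → ℕ → ℕ
  | 0, 0 => 1
  | 0, _ + 1 => 0
  | _ + 1, 0 => 0
  | n + 1, k + 1 => (k + 1) * stirling2 n (k + 1) + stirling2 n k

lemma stirling2_eq_zero : ∀ {n k : ℕ}, n < k → stirling2 n k = 0
  | 0, _ + 1, _ => rfl
  | n + 1, k + 1, h => by
      have h1 : n < k + 1 := by omega
      have h2 : n < k := by omega
      simp [stirling2, stirling2_eq_zero h1, stirling2_eq_zero h2]

lemma mul_descFactorial (x k : ℕ) :
    x * x.descFactorial k = x.descFactorial (k + 1) + k * x.descFactorial k := by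
  rw [Nat.descFactorial_succ]
  rcases le_or_gt k x with h | h
  · have : x - k + k = x := by omega
    nlinarith [Nat.sub_add_cancel h]
  · simp [Nat.descFactorial_eq_zero_iff_lt.2 h]

lemma pow_eq_sum_stirling (n x : ℕ) :
    x ^ n = ∑ k ∈ Finset.range (n + 1), stirling2 n k * x.descFactorial k := by
  induction n with
  | zero => simp [stirling2]
  | succ n ih =>
    have : x ^ (n + 1) = ∑ k ∈ Finset.range (n + 1),
        stirling2 n k * (x.descFactorial (k + 1) + k * x.descFactorial k) := by
      rw [pow_succ, ih, Finset.sum_mul]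
      refine Finset.sum_congr rfl fun k _ => ?_
      rw [mul_assoc, mul_comm (x.descFactorial k) x, mul_descFactorial]
    rw [this]
    simp only [Nat.mul_add]
    rw [Finset.sum_add_distrib]
    have h1 : ∑ k ∈ Finset.range (n + 1), stirling2 n k * (k * x.descFactorial k)
        = ∑ k ∈ Finset.range (n + 1), (k + 1) * stirling2 n (k + 1) * x.descFactorial (k + 1) := by
      rw [Finset.sum_range_succ', Finset.sum_range_succ
        (fun k => (k + 1) * stirling2 n (k + 1) * x.descFactorial (k + 1)),
        stirling2_eq_zero (Nat.lt_succ_self n)]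
      simp only [mul_zero, zero_mul, add_zero, Nat.descFactorial_zero, mul_one]
      refine Finset.sum_congr rfl fun k _ => ?_
      ring
    rw [h1, ← Finset.sum_add_distrib]
    rw [Finset.sum_range_succ' (fun k => stirling2 (n+1) k * x.descFactorial k)]
    simp only [stirling2, Nat.descFactorial_zero]
    ring_nf
    refine Finset.sum_congr rfl fun k _ => ?_
    ring

lemma poch_add (a : ℂ) (p q : ℕ) : poch a (p + q) = poch a p * poch (a + p) q := by
  unfold poch
  rw [Finset.prod_range_add]
  congr 1
  refine Finset.prod_congr rfl fun i _ => ?_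
  push_cast
  ring

lemma poch_swap (a : ℂ) (p q : ℕ) :
    poch (a + p) q * poch a p = poch a q * poch (a + q) p := by
  rw [mul_comm, ← poch_add, add_comm p q, poch_add]

/-- The ratio `∏ⱼ (fⱼ+mⱼ)ₛ/(fⱼ)ₛ` equals `∑_{k=0}^{min(m,s)} Cₖ · s!/(s−k)!`. -/
theorem poch_ratio_eq_sum_falling
    (r : ℕ) (hr : 0 < r) (mv : Fin r → ℕ) (hmv : ∀ j, 0 < mv j)
    (f : Fin r → ℂ) (m : ℕ) (hm : m = ∑ j, mv j)
    (Λ : ℂ) (hΛdef : Λ = ∏ j, poch (f j) (mv j)) (hΛ : Λ ≠ 0)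
    (σc : ℕ → ℂ)
    (hσ : ∀ x : ℂ, ∏ j, poch (f j + x) (mv j) = ∑ j ∈ Finset.range (m + 1), σc j * x ^ j)
    (C : ℕ → ℂ)
    (hC : ∀ k, k ≤ m → C k = Λ⁻¹ * ∑ j ∈ Finset.Icc k m, σc j * (stirling2 j k : ℂ))
    (s : ℕ) (hf : ∀ j, poch (f j) s ≠ 0) :
    (∏ j, poch (f j + mv j) s) / (∏ j, poch (f j) s)
      = ∑ k ∈ Finset.range (min m s + 1),
          C k * (Nat.factorial s : ℂ) / (Nat.factorial (s - k) : ℂ) := by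
  have hΛj : ∀ j, poch (f j) (mv j) ≠ 0 := by
    rw [hΛdef] at hΛ
    intro j hj
    exact hΛ (Finset.prod_eq_zero (Finset.mem_univ j) hj)
  have hS : ∀ j, poch (f j) s ≠ 0 := hf
  -- Step 1: the ratio equals Λ⁻¹ * ∏ poch (f j + s) (mv j)
  have key : (∏ j, poch (f j + mv j) s) / (∏ j, poch (f j) s)
      = Λ⁻¹ * ∏ j, poch (f j + (s : ℂ)) (mv j) := by
    have hprod : (∏ j, poch (f j + mv j) s) * (∏ j, poch (f j) (mv j))
        = (∏ j, poch (f j) s) * ∏ j, poch (f j + (s : ℂ)) (mv j) := by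
      rw [← Finset.prod_mul_distrib, ← Finset.prod_mul_distrib]
      exact Finset.prod_congr rfl fun j _ => poch_swap (f j) (mv j) s
    have hPs : (∏ j, poch (f j) s) ≠ 0 := Finset.prod_ne_zero_iff.2 fun j _ => hS j
    have hPm : (∏ j, poch (f j) (mv j)) ≠ 0 := hΛdef ▸ hΛ
    rw [hΛdef, inv_mul_eq_div, div_eq_div_iff hPs hPm]
    linear_combination hprod
  rw [key, hσ ((s : ℕ) : ℂ)]
  -- Step 2: expand powers via Stirling numbers
  have hpow : ∀ j : ℕ, ((s : ℂ)) ^ j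
      = ∑ k ∈ Finset.range (j + 1), (stirling2 j k : ℂ) * (s.descFactorial k : ℂ) := by
    intro j
    have := pow_eq_sum_stirling j s
    have := congrArg (fun n : ℕ => (n : ℂ)) this
    push_cast at this
    exact this
  have step2 : ∑ j ∈ Finset.range (m + 1), σc j * ((s : ℂ)) ^ j
      = ∑ k ∈ Finset.range (m + 1), (∑ j ∈ Finset.Icc k m, σc j * (stirling2 j k : ℂ))
          * (s.descFactorial k : ℂ) := by
    calc ∑ j ∈ Finset.range (m + 1), σc j * ((s : ℂ)) ^ j
        = ∑ j ∈ Finset.range (m + 1), ∑ k ∈ Finset.range (m + 1),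
            σc j * (stirling2 j k : ℂ) * (s.descFactorial k : ℂ) := by
          refine Finset.sum_congr rfl fun j hj => ?_
          rw [hpow j, Finset.mul_sum]
          have hsub : Finset.range (j + 1) ⊆ Finset.range (m + 1) := by
            apply Finset.range_subset_range.2
            simp only [Finset.mem_range] at hj; omega
          rw [Finset.sum_subset hsub]
          · exact Finset.sum_congr rfl fun k _ => by ring
          · intro k _ hk
            simp only [Finset.mem_range, not_lt] at hk
            rw [stirling2_eq_zero (by omega)]
            simp
      _ = ∑ k ∈ Finset.range (m + 1), ∑ j ∈ Finset.range (m + 1),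
            σc j * (stirling2 j k : ℂ) * (s.descFactorial k : ℂ) := Finset.sum_comm
      _ = ∑ k ∈ Finset.range (m + 1), (∑ j ∈ Finset.Icc k m, σc j * (stirling2 j k : ℂ))
            * (s.descFactorial k : ℂ) := by
          refine Finset.sum_congr rfl fun k hk => ?_
          rw [Finset.sum_mul]
          symm
          have hsub : Finset.Icc k m ⊆ Finset.range (m + 1) := by
            intro j hj
            simp only [Finset.mem_Icc] at hj
            simp only [Finset.mem_range]; omega
          rw [Finset.sum_subset hsub]
          intro j hj hj2
          simp only [Finset.mem_range] at hj
          simp only [Finset.mem_Icc, not_and, not_le] at hj2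
          have : j < k := by
            by_contra h
            exact absurd (hj2 (by omega)) (by omega)
          rw [stirling2_eq_zero this]
          simp
  rw [step2, Finset.mul_sum]
  -- Step 3: identify with C k and truncate the sum
  have hterm : ∀ k ∈ Finset.range (m + 1),
      Λ⁻¹ * ((∑ j ∈ Finset.Icc k m, σc j * (stirling2 j k : ℂ)) * (s.descFactorial k : ℂ))
      = C k * (s.descFactorial k : ℂ) := by
    intro k hk
    simp only [Finset.mem_range] at hk
    rw [hC k (by omega)]
    ring
  rw [Finset.sum_congr rfl hterm]
  -- truncate: terms with k > s vanish
  symm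
  have hsub : Finset.range (min m s + 1) ⊆ Finset.range (m + 1) := by
    apply Finset.range_subset_range.2; omega
  rw [← Finset.sum_subset hsub]
  · refine Finset.sum_congr rfl fun k hk => ?_
    simp only [Finset.mem_range] at hk
    have hks : k ≤ s := by omega
    have : ((s - k).factorial : ℂ) * (s.descFactorial k : ℂ) = (s.factorial : ℂ) := by
      rw [← Nat.cast_mul, Nat.factorial_mul_descFactorial hks]
    have hfac : ((s - k).factorial : ℂ) ≠ 0 := Nat.cast_ne_zero.2 (Nat.factorial_ne_zero _)
    rw [div_eq_iff hfac]
    linear_combination (-(C k)) * this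
  · intro k hk hk2
    simp only [Finset.mem_range, not_lt] at hk hk2
    have : s < k := by omega
    rw [Nat.descFactorial_eq_zero_iff_lt.2 this]
    simp
end

section
/- Ramanujan's second transformation. For every complex number n and every complex x with |x| < 1, (1 − x²)^{−1/2} · Σ_{k=0}^{∞} (1/2 − n)_k (1/2 + n)_k x^{2k} / ( (3/2)_k k! ) = Σ_{k=0}^{∞} (1 − n)_k (1 + n)_k x^{2k} / ( (3/2)_k k! ), where (1 − x²)^{−1/2} denotes the principal branch. -/
open Finset
open scoped Nat

section Coefficients

variable {𝕂 : Type*} [Field 𝕂] [CharZero 𝕂]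

theorem Ring.multichoose_eq_inv_factorial_mul_eval (r : 𝕂) (n : ℕ) :
    Ring.multichoose r n = (n ! : 𝕂)⁻¹ * (ascPochhammer 𝕂 n).eval r := by
  rw [← Polynomial.ascPochhammer_smeval_eq_eval,
    ← Ring.factorial_nsmul_multichoose_eq_ascPochhammer, nsmul_eq_mul,
    inv_mul_cancel_left₀ (by exact_mod_cast n.factorial_ne_zero)]

theorem Ring.multichoose_succ_mul (r : 𝕂) (n : ℕ) :
    Ring.multichoose r (n + 1) * (n + 1) = Ring.multichoose r n * (r + n) := by
  have hn : (n ! : 𝕂) ≠ 0 := by exact_mod_cast n.factorial_ne_zero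
  simp only [Ring.multichoose_eq_inv_factorial_mul_eval, ascPochhammer_succ_eval,
    Nat.factorial_succ, Nat.cast_mul, Nat.cast_succ]
  field_simp

theorem ordinaryHypergeometricCoefficient_succ_mul (a b c : 𝕂) {n : ℕ} (hc : c + n ≠ 0) :
    ordinaryHypergeometricCoefficient a b c (n + 1) * ((c + n) * (n + 1)) =
      ordinaryHypergeometricCoefficient a b c n * ((a + n) * (b + n)) := by
  have hn : (n ! : 𝕂) ≠ 0 := by exact_mod_cast n.factorial_ne_zero
  have hn1 : (n : 𝕂) + 1 ≠ 0 := by exact_mod_cast n.succ_ne_zero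
  simp only [ordinaryHypergeometricCoefficient, ascPochhammer_succ_eval,
    Nat.factorial_succ, Nat.cast_mul, Nat.cast_succ, mul_inv]
  field_simp

/-- With `k = j + m`, `C = ordinaryHypergeometricCoefficient (c - a) (c - b) c` and
`q = Ring.multichoose (a + b - c)`: the `j`-th summand of
`(a + k)(b + k) S k - (k + 1)(c + k) S (k + 1)`, where `S k = ∑ j ≤ k, C j * q (k - j)`,
is `G (j + 1) - G j` for `G j = j (c - 1 + j) C j q (k + 1 - j)`. -/
theorem ordinaryHypergeometricCoefficient_mul_multichoose_telescope (a b c : 𝕂) (j m : ℕ)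
    (hc : c + j ≠ 0) :
    (a + (j + m)) * (b + (j + m)) * ordinaryHypergeometricCoefficient (c - a) (c - b) c j *
        Ring.multichoose (a + b - c) m -
      (j + m + 1) * (c + (j + m)) * ordinaryHypergeometricCoefficient (c - a) (c - b) c j *
        Ring.multichoose (a + b - c) (m + 1) =
    (j + 1) * (c + j) * ordinaryHypergeometricCoefficient (c - a) (c - b) c (j + 1) *
        Ring.multichoose (a + b - c) m -
      j * (c - 1 + j) * ordinaryHypergeometricCoefficient (c - a) (c - b) c j *
        Ring.multichoose (a + b - c) (m + 1) := by
  have hm : (m : 𝕂) + 1 ≠ 0 := by exact_mod_cast m.succ_ne_zero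
  have hC := ordinaryHypergeometricCoefficient_succ_mul (c - a) (c - b) c hc
  have hq := Ring.multichoose_succ_mul (a + b - c) m
  apply mul_left_cancel₀ hm
  linear_combination -(m + 1) * Ring.multichoose (a + b - c) m * hC
    + ((j : 𝕂) * (c - 1 + j) - (j + m + 1) * (c + (j + m))) *
      ordinaryHypergeometricCoefficient (c - a) (c - b) c j * hq

theorem sum_range_ordinaryHypergeometricCoefficient_mul_multichoose (a b c : 𝕂)
    (hc : ∀ k : ℕ, (k : 𝕂) ≠ -c) (k : ℕ) :
    ∑ j ∈ range (k + 1), ordinaryHypergeometricCoefficient (c - a) (c - b) c j *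
        Ring.multichoose (a + b - c) (k - j) =
      ordinaryHypergeometricCoefficient a b c k := by
  set C := ordinaryHypergeometricCoefficient (c - a) (c - b) c
  set q := Ring.multichoose (a + b - c)
  have hc_add (j : ℕ) : c + j ≠ 0 := fun h => hc j (by linear_combination h)
  induction k with
  | zero => simp [C, q]
  | succ k ih =>
    have htel : (a + k) * (b + k) * ∑ j ∈ range (k + 1), C j * q (k - j) -
        (k + 1) * (c + k) * ∑ j ∈ range (k + 1), C j * q (k + 1 - j) =
        (k + 1) * (c + k) * C (k + 1) := by
      have h := sum_range_sub (fun j : ℕ => j * (c - 1 + j) * C j * q (k + 1 - j)) (k + 1)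
      simp only [Nat.cast_zero, zero_mul, sub_zero, Nat.sub_self, Nat.cast_add_one] at h
      rw [show q 0 = 1 from Ring.multichoose_zero_right _, mul_one,
        show c - 1 + ((k : 𝕂) + 1) = c + k by ring] at h
      rw [← h, mul_sum, mul_sum, ← sum_sub_distrib]
      refine sum_congr rfl fun j hj => ?_
      obtain ⟨m, hm⟩ := Nat.exists_eq_add_of_le (mem_range_succ_iff.mp hj)
      rw [hm, Nat.add_sub_cancel_left, show j + m + 1 - j = m + 1 by omega,
        show j + m + 1 - (j + 1) = m by omega]
      push_cast
      convert ordinaryHypergeometricCoefficient_mul_multichoose_telescope a b c j m (hc_add j)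
        using 2 <;> ring
    have hC := ordinaryHypergeometricCoefficient_succ_mul a b c (hc_add k)
    have hB : ((k : 𝕂) + 1) * (c + k) ≠ 0 := mul_ne_zero (Nat.cast_add_one_ne_zero k) (hc_add k)
    apply mul_left_cancel₀ hB
    rw [sum_range_succ, Nat.sub_self, show q 0 = 1 from Ring.multichoose_zero_right _]
    linear_combination -htel + (a + k) * (b + k) * ih - hC

end Coefficients

theorem one_le_radius_ordinaryHypergeometricSeries {𝕂 : Type*} [RCLike 𝕂] (𝔸 : Type*)
    [NormedDivisionRing 𝔸] [NormedAlgebra 𝕂 𝔸] (a b c : 𝕂) (hc : ∀ k : ℕ, (k : 𝕂) ≠ -c) :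
    1 ≤ (ordinaryHypergeometricSeries 𝔸 a b c).radius := by
  by_cases ha : ∃ k : ℕ, (k : 𝕂) = -a
  · obtain ⟨k, hk⟩ := ha
    rw [show a = -k by rw [hk, neg_neg], ordinaryHypergeometric_radius_top_of_neg_nat₁]
    exact le_top
  by_cases hb : ∃ k : ℕ, (k : 𝕂) = -b
  · obtain ⟨k, hk⟩ := hb
    rw [show b = -k by rw [hk, neg_neg], ordinaryHypergeometric_radius_top_of_neg_nat₂]
    exact le_top
  push Not at ha hb
  exact (ordinaryHypergeometricSeries_radius_eq_one 𝔸 a b c fun k => ⟨ha k, hb k, hc k⟩).ge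

theorem Complex.one_sub_cpow_neg_hasFPowerSeriesOnBall_zero (e : ℂ) :
    HasFPowerSeriesOnBall (fun x ↦ (1 - x) ^ (-e)) (.ofScalars ℂ (Ring.multichoose e)) 0 1 := by
  have h := Complex.one_div_one_sub_cpow_hasFPowerSeriesOnBall_zero e
  simp only [one_div, ← Complex.cpow_neg, ← Ring.multichoose_eq] at h
  exact h

theorem one_sub_cpow_mul_ordinaryHypergeometric (a b c : ℂ) (hc : ∀ k : ℕ, (k : ℂ) ≠ -c)
    {z : ℂ} (hz : ‖z‖ < 1) :
    (1 - z) ^ (c - a - b) * ₂F₁ (c - a) (c - b) c z = ₂F₁ a b c z := by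
  have hz' : z ∈ Metric.eball (0 : ℂ) 1 := by
    rw [← ENNReal.ofReal_one, Metric.eball_ofReal]
    simpa using hz
  have hbin := Complex.one_sub_cpow_neg_hasFPowerSeriesOnBall_zero (a + b - c)
  have hbin_norm := FormalMultilinearSeries.summable_norm_apply _
    (Metric.eball_subset_eball hbin.r_le hz')
  have hF_norm := FormalMultilinearSeries.summable_norm_apply
    (ordinaryHypergeometricSeries ℂ (c - a) (c - b) c)
    (Metric.eball_subset_eball (one_le_radius_ordinaryHypergeometricSeries ℂ _ _ c hc) hz')
  have hsum := hbin.hasSum hz'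
  simp only [FormalMultilinearSeries.ofScalars_apply_eq, smul_eq_mul, zero_add,
    neg_sub, sub_add_eq_sub_sub] at hbin_norm hsum
  simp only [ordinaryHypergeometricSeries_apply_eq, smul_eq_mul] at hF_norm
  simp only [ordinaryHypergeometric, ordinaryHypergeometric_sum_eq, smul_eq_mul]
  rw [mul_comm, ← hsum.tsum_eq,
    tsum_mul_tsum_eq_tsum_sum_range_of_summable_norm hF_norm hbin_norm]
  refine tsum_congr fun k => ?_
  refine .trans ?_ (congrArg (· * z ^ k)
    (sum_range_ordinaryHypergeometricCoefficient_mul_multichoose a b c hc k))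
  rw [sum_mul]
  refine sum_congr rfl fun j hj => ?_
  rw [← pow_mul_pow_sub z (mem_range_succ_iff.mp hj)]
  ring

theorem poch_eq_ascPochhammer_eval (a : ℂ) (k : ℕ) : poch a k = (ascPochhammer ℂ k).eval a := by
  induction k with
  | zero => simp [poch]
  | succ k ih => rw [poch, prod_range_succ, ← poch, ih, ascPochhammer_succ_eval]

theorem tsum_poch_mul_poch_div_eq_ordinaryHypergeometric (a b c z : ℂ) :
    ∑' k : ℕ, poch a k * poch b k * z ^ k / (poch c k * (k ! : ℂ)) = ₂F₁ a b c z := by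
  simp only [ordinaryHypergeometric, ordinaryHypergeometric_sum_eq, smul_eq_mul,
    poch_eq_ascPochhammer_eval]
  exact tsum_congr fun k => by ring

/-- **Ramanujan's second transformation.** -/
theorem ramanujan_second_transformation (n x : ℂ) (hx : ‖x‖ < 1) :
    (1 - x ^ 2) ^ (-(1 / 2) : ℂ) *
      ∑' k : ℕ, poch (1 / 2 - n) k * poch (1 / 2 + n) k * x ^ (2 * k) /
        (poch (3 / 2) k * (Nat.factorial k : ℂ))
    = ∑' k : ℕ, poch (1 - n) k * poch (1 + n) k * x ^ (2 * k) /
        (poch (3 / 2) k * (Nat.factorial k : ℂ)) := by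
  have hx2 : ‖x ^ 2‖ < 1 := by
    rw [norm_pow]
    exact pow_lt_one₀ (norm_nonneg x) hx two_ne_zero
  have hc (k : ℕ) : (k : ℂ) ≠ -(3 / 2) := by
    intro h
    have := congrArg Complex.re h
    norm_num at this
    linarith [k.cast_nonneg (α := ℝ)]
  have h := one_sub_cpow_mul_ordinaryHypergeometric (1 + n) (1 - n) (3 / 2) hc hx2
  simp_rw [pow_mul, mul_comm (poch (1 - n) _), tsum_poch_mul_poch_div_eq_ordinaryHypergeometric]
  convert h using 3 <;> ring
end
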